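/- A based matrix over an integral domain R is cobordant to a trivial based matrix if and only if it is hyperbolic. -/

import Mathlib

/-!  Based skew-symmetric matrices over an abelian group `H`, after Turaev.
A based matrix is a triple `(G, s, b)` where `G` is a finite set, `s ∈ G`,
and `b : G × G → H` is skew-symmetric.  We realize the finite set `G` as a
finite set of natural numbers; the values of `b` outside `G` are irrelevant
(isomorphism, homology, fillings etc. only refer to values on `G`). -/

/-- The data of a based matrix over `H`: a finite carrier `G ⊆ ℕ`, a base
point `s` and a pairing `b`. -/
structure PreBM (H : Type*) where
  /-- the underlying finite set -/
  G : Finset ℕ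
  /-- the base point `s` -/
  s : ℕ
  /-- the pairing -/
  b : ℕ → ℕ → H

variable {H : Type*} [AddCommGroup H]

/-- `(G, s, b)` is a based matrix: `s ∈ G` and `b` is skew-symmetric on `G`
(with vanishing diagonal). -/
def IsBM (T : PreBM H) : Prop :=
  T.s ∈ T.G ∧ (∀ g ∈ T.G, ∀ h ∈ T.G, T.b g h = -T.b h g) ∧
    ∀ g ∈ T.G, T.b g g = 0

/-- Isomorphism of based matrices: a bijection of the carriers preserving the
base point and the pairing. -/
def BMIso (T T' : PreBM H) : Prop :=
  ∃ f : ℕ → ℕ, Set.BijOn f (T.G : Set ℕ) (T'.G : Set ℕ) ∧ f T.s = T'.s ∧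
    ∀ g ∈ T.G, ∀ h ∈ T.G, T'.b (f g) (f h) = T.b g h

/-- `g` is an annihilating element of `T`. -/
def Annihilating (T : PreBM H) (g : ℕ) : Prop :=
  g ∈ T.G ∧ g ≠ T.s ∧ ∀ h ∈ T.G, T.b g h = 0

/-- `g` is a core element of `T`. -/
def CoreElt (T : PreBM H) (g : ℕ) : Prop :=
  g ∈ T.G ∧ g ≠ T.s ∧ ∀ h ∈ T.G, T.b g h = T.b T.s h

/-- `g₁, g₂` is a complementary pair of elements of `T`. -/
def ComplPair (T : PreBM H) (g₁ g₂ : ℕ) : Prop :=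
  g₁ ∈ T.G ∧ g₂ ∈ T.G ∧ g₁ ≠ T.s ∧ g₂ ≠ T.s ∧ g₁ ≠ g₂ ∧
    ∀ h ∈ T.G, T.b g₁ h + T.b g₂ h = T.b T.s h

/-- A based matrix is primitive if it has no annihilating elements, no core
elements and no complementary pairs. -/
def Primitive (T : PreBM H) : Prop :=
  (∀ g, ¬Annihilating T g) ∧ (∀ g, ¬CoreElt T g) ∧ ∀ g₁ g₂, ¬ComplPair T g₁ g₂

/-- Elementary extension `M₁`: adjoin one annihilating element. -/
def IsExt1 (T T' : PreBM H) : Prop :=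
  T'.s = T.s ∧ ∃ g, g ∉ T.G ∧ T'.G = insert g T.G ∧
    (∀ x ∈ T.G, ∀ y ∈ T.G, T'.b x y = T.b x y) ∧
    ∀ h ∈ T'.G, T'.b g h = 0

/-- Elementary extension `M₂`: adjoin one core element. -/
def IsExt2 (T T' : PreBM H) : Prop :=
  T'.s = T.s ∧ ∃ g, g ∉ T.G ∧ T'.G = insert g T.G ∧
    (∀ x ∈ T.G, ∀ y ∈ T.G, T'.b x y = T.b x y) ∧
    ∀ h ∈ T'.G, T'.b g h = T'.b T'.s h

/-- Elementary extension `M₃`: adjoin a pair of complementary elements. -/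
def IsExt3 (T T' : PreBM H) : Prop :=
  T'.s = T.s ∧ ∃ g₁ g₂, g₁ ∉ T.G ∧ g₂ ∉ T.G ∧ g₁ ≠ g₂ ∧
    T'.G = insert g₁ (insert g₂ T.G) ∧
    (∀ x ∈ T.G, ∀ y ∈ T.G, T'.b x y = T.b x y) ∧
    ∀ h ∈ T'.G, T'.b g₁ h + T'.b g₂ h = T'.b T'.s h

/-- One elementary extension between based matrices. -/
def StepExt (T T' : PreBM H) : Prop :=
  IsBM T ∧ IsBM T' ∧ (IsExt1 T T' ∨ IsExt2 T T' ∨ IsExt3 T T')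

/-- Two based matrices are homologous if they are related by a finite
sequence of elementary extensions, inverse extensions and isomorphisms. -/
def Homologous : PreBM H → PreBM H → Prop :=
  Relation.EqvGen fun T T' => StepExt T T' ∨ (IsBM T ∧ IsBM T' ∧ BMIso T T')
variable {R : Type*} [CommRing R] [IsDomain R]

/-- The union `G = ⋃_t G_t` of the carriers of a tuple of based matrices. -/
def allG (L : List (PreBM R)) : Finset ℕ := L.foldr (fun T s => T.G ∪ s) ∅

/-- The vector `s₁ + s₂ + ⋯ + s_r ∈ Λ = RG`. -/
noncomputable def sVec (L : List (PreBM R)) : ℕ →₀ R :=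
  (L.map fun T => Finsupp.single T.s (1 : R)).sum

/-- The submodule `Λ_s ⊆ Λ` generated by the base points `s₁, …, s_r`. -/
noncomputable def sSpan (L : List (PreBM R)) : Submodule R (ℕ →₀ R) :=
  Submodule.span R {v : ℕ →₀ R | ∃ T ∈ L, v = Finsupp.single T.s (1 : R)}

/-- The skew-symmetric form `b = ⊕_t b_t` on `Λ = RG`, evaluated on a pair of
vectors: `b(g,h) = b_t(g,h)` for `g, h ∈ G_t` and `b(G_t, G_{t'}) = 0` for
`t ≠ t'` (the carriers being disjoint, at most one summand below is
non-zero). -/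
noncomputable def blockB (L : List (PreBM R)) (v w : ℕ →₀ R) : R :=
  ∑ g ∈ v.support, ∑ h ∈ w.support,
    v g * w h * (L.map fun T => if g ∈ T.G ∧ h ∈ T.G then T.b g h else 0).sum

/-- A vector of `Λ` is short if it lies in `Λ_s`, in `g + Λ_s` for some
`g ∈ G − {s₁, …, s_r}`, or in `g + h + Λ_s` for distinct
`g, h ∈ G − {s₁, …, s_r}`. -/
def ShortVec (L : List (PreBM R)) (x : ℕ →₀ R) : Prop :=
  x ∈ sSpan L ∨
  (∃ g ∈ allG L, (∀ T ∈ L, g ≠ T.s) ∧ x - Finsupp.single g 1 ∈ sSpan L) ∨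
  (∃ g ∈ allG L, ∃ h ∈ allG L, g ≠ h ∧ (∀ T ∈ L, g ≠ T.s ∧ h ≠ T.s) ∧
    x - Finsupp.single g 1 - Finsupp.single h 1 ∈ sSpan L)

/-- A filling of the tuple `T₁, …, T_r`: a finite family of short vectors of
`Λ` whose sum is `∑_{g ∈ G} g` modulo `Λ_s`, one of which equals
`s₁ + ⋯ + s_r`. -/
def IsFilling (L : List (PreBM R)) {k : ℕ} (lam : Fin k → (ℕ →₀ R)) : Prop :=
  (∀ i, ShortVec L (lam i)) ∧ (∃ i, lam i = sVec L) ∧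
    (∑ i, lam i) - (∑ g ∈ allG L, Finsupp.single g (1 : R)) ∈ sSpan L

/-- The genus `σ(T₁, …, T_r)` of a tuple of based matrices: the minimum over
all fillings of half the rank of the matrix `(b(λ_i, λ_j))_{i,j}`. -/
noncomputable def tupleGenus (L : List (PreBM R)) : ℕ :=
  sInf {n : ℕ | ∃ (k : ℕ) (lam : Fin k → (ℕ →₀ R)), IsFilling L lam ∧
    n = (Matrix.of fun i j : Fin k => blockB L (lam i) (lam j)).rank / 2}

/-- `-T = (G, s, -b)`. -/
def negBM (T : PreBM R) : PreBM R := ⟨T.G, T.s, fun g h => -T.b g h⟩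

/-- The carriers of the members of the tuple are pairwise disjoint. -/
def DisjointCarriers (L : List (PreBM R)) : Prop :=
  L.Pairwise fun T T' => Disjoint T.G T'.G
/-- Two based matrices `T₁, T₂` over an integral domain are cobordant if
`σ(T₁, −T₂) = 0`.  (As in the paper, `T₁` and `T₂` are first replaced by
isomorphic based matrices with disjoint carriers.) -/
def Cobordant {R : Type*} [CommRing R] [IsDomain R] (T₁ T₂ : PreBM R) : Prop :=
  ∃ T₁' T₂' : PreBM R, IsBM T₁' ∧ IsBM T₂' ∧ BMIso T₁ T₁' ∧ BMIso T₂ T₂' ∧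
    Disjoint T₁'.G T₂'.G ∧ tupleGenus [T₁', negBM T₂'] = 0

/-! A filling of one tuple of based matrices can be pushed forward along a linear map of
the lattices `Λ = RG` that sends short vectors to short vectors, `s₁ + ⋯ + s_r` to the new
base vector, `∑_{g ∈ G} g` to the new total vector modulo `Λ_s`, and preserves the form `b`:
the image is a filling with the same matrix `(b(λ_i, λ_j))`. Isomorphisms of based matrices
induce such maps. If `T₀ = ({s₀}, s₀, 0)`, then `s₀` pairs trivially with everything, so
copying the `s`-coordinate onto `s₀` maps fillings of `T` to fillings of `(T, -T₀)`, and
erasing the `s₀`-coordinate maps them back; hence `σ(T, -T₀) = 0 ↔ σ(T) = 0`. -/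

open Finsupp

section Carriers

variable {R : Type*}

lemma subset_allG {L : List (PreBM R)} {T : PreBM R} (h : T ∈ L) : T.G ⊆ allG L := by
  induction L with
  | nil => simp at h
  | cons T' L ih =>
    rcases List.mem_cons.mp h with rfl | h
    · exact Finset.subset_union_left
    · exact (ih h).trans Finset.subset_union_right

lemma allG_singleton (T : PreBM R) : allG [T] = T.G := by
  simp [allG]

lemma allG_pair (T M : PreBM R) : allG [T, M] = T.G ∪ M.G := by
  simp [allG]

end Carriers

section Fillings

variable {R : Type*} [CommRing R]

def blockCoeff (L : List (PreBM R)) (g h : ℕ) : R :=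
  (L.map fun T => if g ∈ T.G ∧ h ∈ T.G then T.b g h else 0).sum

noncomputable def gramMatrix (L : List (PreBM R)) {k : ℕ} (lam : Fin k → ℕ →₀ R) :
    Matrix (Fin k) (Fin k) R :=
  Matrix.of fun i j => blockB L (lam i) (lam j)

lemma blockB_def (L : List (PreBM R)) (v w : ℕ →₀ R) :
    blockB L v w = ∑ g ∈ v.support, ∑ h ∈ w.support, v g * w h * blockCoeff L g h :=
  rfl

lemma blockB_eq_sum (L : List (PreBM R)) {v w : ℕ →₀ R} {S S' : Finset ℕ}
    (hv : v.support ⊆ S) (hw : w.support ⊆ S') :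
    blockB L v w = ∑ g ∈ S, ∑ h ∈ S', v g * w h * blockCoeff L g h := by
  rw [blockB_def, Finset.sum_subset hv fun g _ hg => by simp [notMem_support_iff.mp hg]]
  exact Finset.sum_congr rfl fun g _ =>
    Finset.sum_subset hw fun h _ hh => by simp [notMem_support_iff.mp hh]

lemma blockCoeff_singleton (T : PreBM R) (g h : ℕ) :
    blockCoeff [T] g h = if g ∈ T.G ∧ h ∈ T.G then T.b g h else 0 := by
  simp [blockCoeff]

lemma blockB_singleton_congr {T : PreBM R} {v w v' w' : ℕ →₀ R}
    (hv : ∀ g ∈ T.G, v' g = v g) (hw : ∀ h ∈ T.G, w' h = w h) :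
    blockB [T] v' w' = blockB [T] v w := by
  classical
  rw [blockB_eq_sum _ (Finset.subset_union_left (s₂ := v.support))
      (Finset.subset_union_left (s₂ := w.support)),
    blockB_eq_sum _ (Finset.subset_union_right (s₁ := v'.support))
      (Finset.subset_union_right (s₁ := w'.support))]
  refine Finset.sum_congr rfl fun g _ => Finset.sum_congr rfl fun h _ => ?_
  rw [blockCoeff_singleton]
  split_ifs with hgh
  · rw [hv g hgh.1, hw h hgh.2]
  · simp

lemma blockB_pair_of_carrier_eq_singleton {T M : PreBM R} (hM : IsBM M)
    (hMG : M.G = {M.s}) : blockB [T, M] = blockB [T] := by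
  have hM0 : ∀ g h, (if g ∈ M.G ∧ h ∈ M.G then M.b g h else 0) = 0 := by
    intro g h
    split_ifs with hgh
    · simp only [hMG, Finset.mem_singleton] at hgh
      rw [hgh.1, hgh.2, hM.2.2 _ hM.1]
    · rfl
  ext v w
  simp [blockB_def, blockCoeff, hM0]

lemma single_base_mem_sSpan {L : List (PreBM R)} {T : PreBM R} (h : T ∈ L) :
    single T.s (1 : R) ∈ sSpan L :=
  Submodule.subset_span ⟨T, h, rfl⟩

lemma sVec_mem_sSpan (L : List (PreBM R)) : sVec L ∈ sSpan L :=
  list_sum_mem fun _ hx => by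
    obtain ⟨T, hT, rfl⟩ := List.mem_map.mp hx
    exact single_base_mem_sSpan hT

lemma sVec_singleton (T : PreBM R) : sVec [T] = single T.s 1 := by
  simp [sVec]

lemma sVec_pair (T M : PreBM R) : sVec [T, M] = single T.s 1 + single M.s 1 := by
  simp [sVec]

lemma sSpan_le_supported {L : List (PreBM R)} (hL : ∀ T ∈ L, T.s ∈ T.G) :
    sSpan L ≤ supported R R ↑(allG L) :=
  Submodule.span_le.mpr fun _ ⟨T, hT, hv⟩ =>
    hv ▸ single_mem_supported R 1 (subset_allG hT (hL T hT))

lemma ShortVec.mem_supported {L : List (PreBM R)} (hL : ∀ T ∈ L, T.s ∈ T.G)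
    {x : ℕ →₀ R} (hx : ShortVec L x) : x ∈ supported R R ↑(allG L) := by
  have hspan := sSpan_le_supported hL
  rcases hx with hx | ⟨g, hg, -, hx⟩ | ⟨g, hg, h, hh, -, -, hx⟩
  · exact hspan hx
  · simpa using add_mem (hspan hx) (single_mem_supported R 1 hg)
  · simpa using add_mem (add_mem (hspan hx) (single_mem_supported R 1 hh))
      (single_mem_supported R 1 hg)

end Fillings

section FillingMaps

variable {R : Type*} [CommRing R]

lemma exists_isFilling (L : List (PreBM R)) :
    ∃ (k : ℕ) (lam : Fin k → ℕ →₀ R), IsFilling L lam := by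
  classical
  let e := (allG L).equivFin.symm
  refine ⟨_, Fin.cons (sVec L) fun j => single (e j : ℕ) 1, fun i => ?_, ⟨0, rfl⟩, ?_⟩
  · refine Fin.cases ?_ (fun j => ?_) i
    · exact Or.inl (sVec_mem_sSpan L)
    · rw [Fin.cons_succ]
      by_cases hg : ∀ T ∈ L, (e j : ℕ) ≠ T.s
      · exact Or.inr (Or.inl ⟨e j, (e j).2, hg, by simp⟩)
      · obtain ⟨T, hT, he⟩ : ∃ T ∈ L, (e j : ℕ) = T.s := by simpa using hg
        exact Or.inl (he ▸ single_base_mem_sSpan hT)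
  · have hsum : ∑ j, single (e j : ℕ) (1 : R) = ∑ g ∈ allG L, single g 1 := by
      rw [Equiv.sum_comp e fun g => single (g : ℕ) (1 : R)]
      exact Finset.sum_coe_sort (allG L) fun g => single g 1
    simpa [Fin.sum_cons, hsum] using sVec_mem_sSpan L

-- Every tuple has a filling, so `tupleGenus` never takes the junk value `sInf ∅ = 0`.
lemma tupleGenus_eq_zero_iff {L : List (PreBM R)} :
    tupleGenus L = 0 ↔
      ∃ (k : ℕ) (lam : Fin k → ℕ →₀ R), IsFilling L lam ∧ (gramMatrix L lam).rank / 2 = 0 := by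
  refine Nat.sInf_eq_zero.trans ⟨?_, fun ⟨k, lam, h, h0⟩ => Or.inl ⟨k, lam, h, h0.symm⟩⟩
  rintro (⟨k, lam, h, h0⟩ | hempty)
  · exact ⟨k, lam, h, h0.symm⟩
  · obtain ⟨k, lam, h⟩ := exists_isFilling L
    exact absurd hempty (Set.nonempty_iff_ne_empty.mp ⟨_, k, lam, h, rfl⟩)

lemma ShortVec.map {L L' : List (PreBM R)} {Φ : (ℕ →₀ R) →ₗ[R] ℕ →₀ R} {φ : ℕ → ℕ}
    (hspan : sSpan L ≤ (sSpan L').comap Φ)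
    (hφ : ∀ g ∈ allG L, (∀ T ∈ L, g ≠ T.s) →
      φ g ∈ allG L' ∧ (∀ T ∈ L', φ g ≠ T.s) ∧ Φ (single g 1) = single (φ g) 1)
    (hinj : Set.InjOn φ (allG L)) {x : ℕ →₀ R} (hx : ShortVec L x) : ShortVec L' (Φ x) := by
  rcases hx with hx | ⟨g, hg, hgs, hx⟩ | ⟨g, hg, h, hh, hne, hgh, hx⟩
  · exact Or.inl (hspan hx)
  · obtain ⟨hg', hgs', hΦg⟩ := hφ g hg hgs
    refine Or.inr (Or.inl ⟨φ g, hg', hgs', ?_⟩)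
    simpa [hΦg] using hspan hx
  · obtain ⟨hg', hgs', hΦg⟩ := hφ g hg fun T hT => (hgh T hT).1
    obtain ⟨hh', hhs', hΦh⟩ := hφ h hh fun T hT => (hgh T hT).2
    refine Or.inr (Or.inr ⟨φ g, hg', φ h, hh', hinj.ne hg hh hne,
      fun T hT => ⟨hgs' T hT, hhs' T hT⟩, ?_⟩)
    simpa [hΦg, hΦh] using hspan hx

structure IsFillingMap (L L' : List (PreBM R)) (Φ : (ℕ →₀ R) →ₗ[R] ℕ →₀ R) : Prop where
  map_sSpan : sSpan L ≤ (sSpan L').comap Φ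
  map_shortVec : ∀ x, ShortVec L x → ShortVec L' (Φ x)
  map_sVec : Φ (sVec L) = sVec L'
  map_sum_allG : Φ (∑ g ∈ allG L, single g 1) - ∑ g ∈ allG L', single g 1 ∈ sSpan L'
  blockB_map : ∀ v w, ShortVec L v → ShortVec L w → blockB L' (Φ v) (Φ w) = blockB L v w

namespace IsFillingMap

variable {L L' : List (PreBM R)} {Φ : (ℕ →₀ R) →ₗ[R] ℕ →₀ R}

lemma isFilling (hΦ : IsFillingMap L L' Φ) {k : ℕ} {lam : Fin k → ℕ →₀ R}
    (h : IsFilling L lam) : IsFilling L' (Φ ∘ lam) := by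
  obtain ⟨hshort, ⟨i, hi⟩, hsum⟩ := h
  refine ⟨fun i => hΦ.map_shortVec _ (hshort i), ⟨i, by simp [hi, hΦ.map_sVec]⟩, ?_⟩
  convert add_mem (Submodule.mem_comap.mp (hΦ.map_sSpan hsum)) hΦ.map_sum_allG using 1
  simp [map_sum]

lemma gramMatrix_comp (hΦ : IsFillingMap L L' Φ) {k : ℕ} {lam : Fin k → ℕ →₀ R}
    (h : ∀ i, ShortVec L (lam i)) : gramMatrix L' (Φ ∘ lam) = gramMatrix L lam :=
  Matrix.ext fun i j => hΦ.blockB_map _ _ (h i) (h j)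

lemma tupleGenus_eq_zero (hΦ : IsFillingMap L L' Φ) (h0 : tupleGenus L = 0) :
    tupleGenus L' = 0 := by
  obtain ⟨k, lam, hlam, hrank⟩ := tupleGenus_eq_zero_iff.mp h0
  exact tupleGenus_eq_zero_iff.mpr
    ⟨k, Φ ∘ lam, hΦ.isFilling hlam, by rwa [hΦ.gramMatrix_comp hlam.1]⟩

end IsFillingMap

end FillingMaps

section Isomorphisms

variable {H : Type*}

lemma BMIso.refl (T : PreBM H) : BMIso T T :=
  ⟨id, Set.bijOn_id _, rfl, fun _ _ _ _ => rfl⟩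

lemma BMIso.symm {T W : PreBM H} (hs : T.s ∈ T.G) (h : BMIso T W) : BMIso W T := by
  obtain ⟨f, hbij, hfs, hfb⟩ := h
  have hinv := hbij.invOn_invFunOn
  have hbij' := hbij.symm hinv.symm
  refine ⟨Function.invFunOn f T.G, hbij', ?_, fun x hx y hy => ?_⟩
  · rw [← hfs, hinv.1 hs]
  · rw [← hfb _ (hbij'.mapsTo hx) _ (hbij'.mapsTo hy), hinv.2 hx, hinv.2 hy]

lemma BMIso.carrier_eq_singleton {T W : PreBM H} (h : BMIso T W) (hT : T.G = {T.s}) :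
    W.G = {W.s} := by
  obtain ⟨f, hbij, hfs, -⟩ := h
  apply Finset.coe_injective
  rw [Finset.coe_singleton, ← hbij.image_eq, hT, Finset.coe_singleton, Set.image_singleton, hfs]

end Isomorphisms

section Transport

variable {R : Type*} [CommRing R]

lemma sSpan_le_comap_iff {L L' : List (PreBM R)} {Φ : (ℕ →₀ R) →ₗ[R] ℕ →₀ R} :
    sSpan L ≤ (sSpan L').comap Φ ↔ ∀ T ∈ L, Φ (single T.s 1) ∈ sSpan L' := by
  refine Submodule.span_le.trans ⟨fun h T hT => h ⟨T, hT, rfl⟩, ?_⟩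
  rintro h _ ⟨T, hT, rfl⟩
  exact h T hT

lemma blockB_mapDomain {T W : PreBM R} {f : ℕ → ℕ} (hbij : Set.BijOn f T.G W.G)
    (hfb : ∀ g ∈ T.G, ∀ h ∈ T.G, W.b (f g) (f h) = T.b g h) {v w : ℕ →₀ R}
    (hv : v ∈ supported R R ↑T.G) (hw : w ∈ supported R R ↑T.G) :
    blockB [W] (mapDomain f v) (mapDomain f w) = blockB [T] v w := by
  classical
  have hW : W.G = T.G.image f := Finset.coe_injective (by simpa using hbij.image_eq.symm)
  have hsupp : ∀ u ∈ supported R R ↑T.G, (mapDomain f u).support ⊆ W.G := fun u hu =>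
    hW ▸ mapDomain_support.trans (Finset.image_subset_image ((mem_supported R u).mp hu))
  rw [blockB_eq_sum _ (hsupp v hv) (hsupp w hw),
    blockB_eq_sum _ ((mem_supported R v).mp hv) ((mem_supported R w).mp hw), hW,
    Finset.sum_image hbij.injOn]
  refine Finset.sum_congr rfl fun g hg => ?_
  rw [Finset.sum_image hbij.injOn]
  refine Finset.sum_congr rfl fun h hh => ?_
  rw [mapDomain_apply' _ _ hv hbij.injOn hg, mapDomain_apply' _ _ hw hbij.injOn hh,
    blockCoeff_singleton, blockCoeff_singleton, if_pos ⟨hbij.mapsTo hg, hbij.mapsTo hh⟩,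
    if_pos ⟨hg, hh⟩, hfb g hg h hh]

lemma isFillingMap_lmapDomain {T W : PreBM R} {f : ℕ → ℕ} (hs : T.s ∈ T.G)
    (hbij : Set.BijOn f T.G W.G) (hfs : f T.s = W.s)
    (hfb : ∀ g ∈ T.G, ∀ h ∈ T.G, W.b (f g) (f h) = T.b g h) :
    IsFillingMap [T] [W] (lmapDomain R R f) := by
  classical
  have hspan : sSpan [T] ≤ (sSpan [W]).comap (lmapDomain R R f) :=
    sSpan_le_comap_iff.mpr <| by
      simpa [hfs] using single_base_mem_sSpan (List.mem_singleton_self W)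
  have hφ : ∀ g ∈ allG [T], (∀ T' ∈ [T], g ≠ T'.s) → f g ∈ allG [W] ∧
      (∀ W' ∈ [W], f g ≠ W'.s) ∧ lmapDomain R R f (single g 1) = single (f g) 1 := by
    simp only [allG_singleton, List.mem_singleton, forall_eq]
    intro g hg hgs
    exact ⟨hbij.mapsTo hg, fun hc => hgs (hbij.injOn hg hs (hc.trans hfs.symm)), by simp⟩
  have hinj : Set.InjOn f (allG [T]) := by simpa [allG_singleton] using hbij.injOn
  refine ⟨hspan, fun x => ShortVec.map hspan hφ hinj, by simp [sVec_singleton, hfs], ?_,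
    fun v w hv hw => ?_⟩
  · have hW : W.G = T.G.image f := Finset.coe_injective (by simpa using hbij.image_eq.symm)
    simp [allG_singleton, hW, Finset.sum_image hbij.injOn]
  · have hL : ∀ T' ∈ [T], T'.s ∈ T'.G := by simpa using hs
    have hv' := hv.mem_supported hL
    have hw' := hw.mem_supported hL
    rw [allG_singleton] at hv' hw'
    exact blockB_mapDomain hbij hfb hv' hw'

lemma BMIso.tupleGenus_eq_zero {T W : PreBM R} (hs : T.s ∈ T.G) (h : BMIso T W)
    (h0 : tupleGenus [T] = 0) : tupleGenus [W] = 0 := by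
  obtain ⟨f, hbij, hfs, hfb⟩ := h
  exact (isFillingMap_lmapDomain hs hbij hfs hfb).tupleGenus_eq_zero h0

end Transport

section TrivialSummand

variable {R : Type*} [CommRing R] {T M : PreBM R}

lemma IsBM.neg (hT : IsBM T) : IsBM (negBM T) :=
  ⟨hT.1, fun g hg h hh => by simp only [negBM, hT.2.1 g hg h hh],
    fun g hg => by simp only [negBM, hT.2.2 g hg, neg_zero]⟩

lemma isFillingMap_singleton_pair (hT : T.s ∈ T.G) (hM : IsBM M) (hMG : M.G = {M.s})
    (hMT : M.s ∉ T.G) :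
    IsFillingMap [T] [T, M] (LinearMap.id + lsingle M.s ∘ₗ lapply T.s) := by
  classical
  set Φ : (ℕ →₀ R) →ₗ[R] ℕ →₀ R := LinearMap.id + lsingle M.s ∘ₗ lapply T.s
  have hΦ : ∀ v, Φ v = v + single M.s (v T.s) := fun v => rfl
  have hoff : ∀ v, ∀ g ∈ T.G, Φ v g = v g := fun v g hg => by
    simp [hΦ, show M.s ≠ g from fun h => hMT (h ▸ hg)]
  have hΦs : Φ (single T.s 1) = sVec [T, M] := by simp [hΦ, sVec_pair]
  have hspan : sSpan [T] ≤ (sSpan [T, M]).comap Φ :=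
    sSpan_le_comap_iff.mpr <| by simpa [hΦs] using sVec_mem_sSpan [T, M]
  have hφ : ∀ g ∈ allG [T], (∀ T' ∈ [T], g ≠ T'.s) → id g ∈ allG [T, M] ∧
      (∀ T' ∈ [T, M], id g ≠ T'.s) ∧ Φ (single g 1) = single (id g) 1 := by
    simp only [allG_singleton, allG_pair, List.mem_singleton, forall_eq]
    intro g hg hgs
    have hgM : g ≠ M.s := fun h => hMT (h ▸ hg)
    exact ⟨Finset.mem_union_left _ hg, by simp [hgs, hgM], by simp [hΦ, hgs]⟩
  have hsum : Φ (∑ g ∈ T.G, single g 1) = ∑ g ∈ allG [T, M], single g 1 := by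
    rw [allG_pair, hMG, Finset.sum_union (Finset.disjoint_singleton_right.mpr hMT)]
    simp [hΦ, finsetSum_apply, single_apply, hT]
  refine ⟨hspan, fun x => ShortVec.map hspan hφ (Set.injOn_id _),
    by rw [sVec_singleton, hΦs], by simp [allG_singleton, hsum], fun v w _ _ => ?_⟩
  rw [blockB_pair_of_carrier_eq_singleton hM hMG]
  exact blockB_singleton_congr (hoff v) (hoff w)

lemma isFillingMap_pair_singleton (hT : T.s ∈ T.G) (hM : IsBM M) (hMG : M.G = {M.s})
    (hMT : M.s ∉ T.G) :
    IsFillingMap [T, M] [T] (LinearMap.id - lsingle M.s ∘ₗ lapply M.s) := by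
  classical
  set E : (ℕ →₀ R) →ₗ[R] ℕ →₀ R := LinearMap.id - lsingle M.s ∘ₗ lapply M.s
  have hE : ∀ v, E v = v - single M.s (v M.s) := fun v => rfl
  have hoff : ∀ v, ∀ g ∈ T.G, E v g = v g := fun v g hg => by
    simp [hE, show M.s ≠ g from fun h => hMT (h ▸ hg)]
  have hTM : T.s ≠ M.s := fun h => hMT (h ▸ hT)
  have hspan : sSpan [T, M] ≤ (sSpan [T]).comap E :=
    sSpan_le_comap_iff.mpr <| by
      simpa [hE, hTM] using single_base_mem_sSpan (List.mem_singleton_self T)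
  have hφ : ∀ g ∈ allG [T, M], (∀ T' ∈ [T, M], g ≠ T'.s) → id g ∈ allG [T] ∧
      (∀ T' ∈ [T], id g ≠ T'.s) ∧ E (single g 1) = single (id g) 1 := by
    intro g hg hgs
    have hgT : g ≠ T.s := hgs T (by simp)
    have hgM : g ≠ M.s := hgs M (by simp)
    rw [allG_pair, hMG, Finset.mem_union, Finset.mem_singleton] at hg
    exact ⟨by simpa [allG_singleton] using hg.resolve_right hgM, by simpa using hgT,
      by simp [hE, hgM]⟩
  have hsum : E (∑ g ∈ allG [T, M], single g 1) = ∑ g ∈ T.G, single g 1 := by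
    rw [allG_pair, hMG, Finset.sum_union (Finset.disjoint_singleton_right.mpr hMT)]
    simp [hE, single_apply, hMT]
  refine ⟨hspan, fun x => ShortVec.map hspan hφ (Set.injOn_id _),
    by simp [hE, sVec_pair, sVec_singleton, hTM], by simp [allG_singleton, hsum],
    fun v w _ _ => ?_⟩
  rw [blockB_pair_of_carrier_eq_singleton hM hMG]
  exact blockB_singleton_congr (hoff v) (hoff w)

lemma tupleGenus_pair_eq_zero_iff (hT : T.s ∈ T.G) (hM : IsBM M) (hMG : M.G = {M.s})
    (hMT : M.s ∉ T.G) : tupleGenus [T, M] = 0 ↔ tupleGenus [T] = 0 :=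
  ⟨(isFillingMap_pair_singleton hT hM hMG hMT).tupleGenus_eq_zero,
    (isFillingMap_singleton_pair hT hM hMG hMT).tupleGenus_eq_zero⟩

end TrivialSummand

/-- A based matrix over an integral domain is cobordant to
a trivial based matrix (one whose carrier consists of the base point alone)
if and only if it is hyperbolic, i.e. `σ(T) = 0`. -/
theorem cobordant_trivial_iff_hyperbolic {R : Type*} [CommRing R] [IsDomain R]
    (T : PreBM R) (hT : IsBM T) :
    (∃ T₀ : PreBM R, IsBM T₀ ∧ T₀.G = {T₀.s} ∧ Cobordant T T₀) ↔
      tupleGenus [T] = 0 := by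
  constructor
  · rintro ⟨T₀, -, hT₀G, T₁, T₂, hT₁, hT₂, hTT₁, hT₀T₂, hdisj, h0⟩
    have hT₂G : T₂.G = {T₂.s} := hT₀T₂.carrier_eq_singleton hT₀G
    have hT₂T₁ : T₂.s ∉ T₁.G := Finset.disjoint_right.mp hdisj (by simp [hT₂G])
    rw [tupleGenus_pair_eq_zero_iff hT₁.1 hT₂.neg hT₂G hT₂T₁] at h0
    exact (hTT₁.symm hT.1).tupleGenus_eq_zero hT₁.1 h0
  · intro h0
    obtain ⟨s₀, hs₀⟩ := Infinite.exists_notMem_finset T.G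
    let T₀ : PreBM R := ⟨{s₀}, s₀, fun _ _ => 0⟩
    have hT₀ : IsBM T₀ :=
      ⟨Finset.mem_singleton_self _, fun _ _ _ _ => neg_zero.symm, fun _ _ => rfl⟩
    refine ⟨T₀, hT₀, rfl, T, T₀, hT, hT₀, .refl T, .refl T₀,
      Finset.disjoint_singleton_right.mpr hs₀, ?_⟩
    exact (tupleGenus_pair_eq_zero_iff hT.1 hT₀.neg rfl hs₀).mpr h0
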